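/- arXiv:2508.14858 — 2 statements merged into one kernel-verified Lean document; each statement's English description precedes it below -/
import Mathlib

section
/- Conversely, if a survey distribution S on a finite set Y satisfies dS(y) ∝ dP(y)·exp(−θ·η(y)) for a population distribution P, then there exist response probabilities α: Y → (0,1] with log α(y) − log α(y') = θ·(η(y') − η(y)) for all y, y' such that the conditional distribution of Y given response equals S. -/
/-!
Take `α y = exp (-θ η y - M)` with `M = max_y (-θ η y)`: subtracting the maximum puts `α` in
`(0, 1]` without changing log-differences, and it rescales all tilted weights `P y exp (-θ η y)`
by the same factor `exp (-M)`, which cancels on normalization.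
-/

open Real Finset

lemma mul_mul_const_div_sum {ι : Type*} (s : Finset ι) (P w : ι → ℝ) {c : ℝ} (hc : c ≠ 0)
    (i : ι) : P i * (w i * c) / ∑ j ∈ s, P j * (w j * c) = P i * w i / ∑ j ∈ s, P j * w j := by
  simp only [← mul_assoc, ← sum_mul]
  exact mul_div_mul_right _ _ hc

section ExpSubSup

variable {Y : Type*} [Fintype Y] [Nonempty Y] (f : Y → ℝ)

noncomputable def expSubSup (y : Y) : ℝ := exp (f y - univ.sup' univ_nonempty f)

lemma expSubSup_pos (y : Y) : 0 < expSubSup f y := exp_pos _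

lemma expSubSup_le_one (y : Y) : expSubSup f y ≤ 1 :=
  exp_le_one_iff.mpr (sub_nonpos.mpr (le_sup' f (mem_univ y)))

lemma log_expSubSup_sub (y y' : Y) :
    log (expSubSup f y) - log (expSubSup f y') = f y - f y' := by
  simp only [expSubSup, log_exp]
  ring

lemma expSubSup_eq_exp_mul (y : Y) :
    expSubSup f y = exp (f y) * exp (-univ.sup' univ_nonempty f) := by
  rw [expSubSup, sub_eq_add_neg, exp_add]

end ExpSubSup

theorem stmt2_general {Y : Type*} [Fintype Y] [Nonempty Y]
    (P S : Y → ℝ)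
    (η : Y → ℝ) (θ : ℝ)
    (hS : ∀ y, S y = P y * Real.exp (-(θ * η y)) / ∑ y', P y' * Real.exp (-(θ * η y'))) :
    ∃ α : Y → ℝ, (∀ y, 0 < α y ∧ α y ≤ 1) ∧
      (∀ y y', Real.log (α y) - Real.log (α y') = θ * (η y' - η y)) ∧
      (∀ y, S y = P y * α y / ∑ y', P y' * α y') := by
  set f : Y → ℝ := fun y => -(θ * η y)
  refine ⟨expSubSup f, fun y => ⟨expSubSup_pos f y, expSubSup_le_one f y⟩, ?_, ?_⟩
  · intro y y'
    rw [log_expSubSup_sub]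
    ring
  · intro y
    simp only [hS, expSubSup_eq_exp_mul]
    exact (mul_mul_const_div_sum _ P (fun y => exp (f y)) (exp_ne_zero _) y).symm

theorem stmt2 {Y : Type*} [Fintype Y] [Nonempty Y]
    (P S : Y → ℝ) (hP : ∀ y, 0 < P y) (hPsum : ∑ y, P y = 1)
    (η : Y → ℝ) (θ : ℝ)
    (hS : ∀ y, S y = P y * Real.exp (-(θ * η y)) / ∑ y', P y' * Real.exp (-(θ * η y'))) :
    ∃ α : Y → ℝ, (∀ y, 0 < α y ∧ α y ≤ 1) ∧
      (∀ y y', Real.log (α y) - Real.log (α y') = θ * (η y' - η y)) ∧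
      (∀ y, S y = P y * α y / ∑ y', P y' * α y') :=
  stmt2_general P S η θ hS
end

section
/- Under the same setup, for any probability distribution Q on Y with E_Q[ψ(Y)] = c, the following Pythagorean identity holds: KL(Q || S) = KL(Q || Q_{θ*}) + KL(Q_{θ*} || S), where Q_{θ*} is the exponential tilting of S by ψ satisfying the moment constraint E_{Q_{θ*}}[ψ(Y)] = c. -/
/-! The log-ratio `log (Q_θ / S) = θ ψ - A θ` is affine in `ψ`, so its expectation is the same
under every distribution with mean `c` for `ψ`; splitting `log (Q / S)` as
`log (Q / Q_θ) + log (Q_θ / S)` and taking expectations under `Q` gives the identity. -/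

open Real Finset

lemma mul_log_div_eq_mul_log_div_add {q p r : ℝ} (hp : p ≠ 0) (hr : r ≠ 0) :
    q * log (q / r) = q * log (q / p) + q * log (p / r) := by
  rcases eq_or_ne q 0 with rfl | hq
  · simp
  · rw [← mul_add, ← log_mul (div_ne_zero hq hp) (div_ne_zero hp hr), div_mul_div_cancel₀ hp]

lemma sum_mul_exp_sub_log_sum_eq_one {ι : Type*} (s : Finset ι) (w f : ι → ℝ)
    (hZ : 0 < ∑ i ∈ s, w i * exp (f i)) :
    ∑ i ∈ s, w i * exp (f i - log (∑ j ∈ s, w j * exp (f j))) = 1 := by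
  simp_rw [exp_sub, exp_log hZ, ← mul_div_assoc, ← sum_div]
  exact div_self hZ.ne'

theorem sum_mul_log_div_eq_add_of_log_div_affine {ι : Type*} (s : Finset ι) (Q P R ψ : ι → ℝ)
    (a b : ℝ) (hP : ∀ i ∈ s, P i ≠ 0) (hR : ∀ i ∈ s, R i ≠ 0)
    (hlog : ∀ i ∈ s, log (P i / R i) = a * ψ i + b)
    (hmass : ∑ i ∈ s, Q i = ∑ i ∈ s, P i) (hmean : ∑ i ∈ s, Q i * ψ i = ∑ i ∈ s, P i * ψ i) :
    ∑ i ∈ s, Q i * log (Q i / R i)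
      = ∑ i ∈ s, Q i * log (Q i / P i) + ∑ i ∈ s, P i * log (P i / R i) := by
  have expect_affine : ∀ D : ι → ℝ, ∑ i ∈ s, D i * log (P i / R i)
      = a * ∑ i ∈ s, D i * ψ i + b * ∑ i ∈ s, D i := by
    intro D
    rw [mul_sum, mul_sum, ← sum_add_distrib]
    exact sum_congr rfl fun i hi => by rw [hlog i hi]; ring
  calc ∑ i ∈ s, Q i * log (Q i / R i)
      = ∑ i ∈ s, Q i * log (Q i / P i) + ∑ i ∈ s, Q i * log (P i / R i) := by
        rw [← sum_add_distrib]
        exact sum_congr rfl fun i hi => mul_log_div_eq_mul_log_div_add (hP i hi) (hR i hi)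
    _ = ∑ i ∈ s, Q i * log (Q i / P i) + ∑ i ∈ s, P i * log (P i / R i) := by
        rw [expect_affine, expect_affine, hmass, hmean]

theorem stmt10_general {Y : Type*} [Fintype Y] [Nonempty Y]
    (S : Y → ℝ) (hS : ∀ y, 0 < S y)
    (ψ : Y → ℝ) (c : ℝ)
    (A : ℝ → ℝ) (hA : ∀ t, A t = Real.log (∑ y, S y * Real.exp (t * ψ y)))
    (Qt : ℝ → Y → ℝ) (hQt : ∀ t y, Qt t y = S y * Real.exp (t * ψ y - A t))
    (θs : ℝ) (hmatch : ∑ y, Qt θs y * ψ y = c)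
    (Q : Y → ℝ) (hQsum : ∑ y, Q y = 1)
    (hQc : ∑ y, Q y * ψ y = c) :
    ∑ y, Q y * Real.log (Q y / S y)
      = (∑ y, Q y * Real.log (Q y / Qt θs y))
        + ∑ y, Qt θs y * Real.log (Qt θs y / S y) := by
  have hQt_pos : ∀ y, 0 < Qt θs y := fun y => by rw [hQt]; exact mul_pos (hS y) (exp_pos _)
  have hQt_sum : ∑ y, Qt θs y = 1 := by
    simp_rw [hQt, hA]
    exact sum_mul_exp_sub_log_sum_eq_one _ _ _
      (sum_pos (fun y _ => mul_pos (hS y) (exp_pos _)) univ_nonempty)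
  have hlog : ∀ y, log (Qt θs y / S y) = θs * ψ y + -A θs := fun y => by
    rw [hQt, mul_div_cancel_left₀ _ (hS y).ne', log_exp, sub_eq_add_neg]
  exact sum_mul_log_div_eq_add_of_log_div_affine _ Q (Qt θs) S ψ θs (-A θs)
    (fun y _ => (hQt_pos y).ne') (fun y _ => (hS y).ne') (fun y _ => hlog y)
    (hQsum.trans hQt_sum.symm) (hQc.trans hmatch.symm)

theorem stmt10 {Y : Type*} [Fintype Y] [Nonempty Y]
    (S : Y → ℝ) (hS : ∀ y, 0 < S y) (hsum : ∑ y, S y = 1)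
    (ψ : Y → ℝ) (c : ℝ)
    (A : ℝ → ℝ) (hA : ∀ t, A t = Real.log (∑ y, S y * Real.exp (t * ψ y)))
    (Qt : ℝ → Y → ℝ) (hQt : ∀ t y, Qt t y = S y * Real.exp (t * ψ y - A t))
    (θs : ℝ) (hmatch : ∑ y, Qt θs y * ψ y = c)
    (Q : Y → ℝ) (hQ0 : ∀ y, 0 ≤ Q y) (hQsum : ∑ y, Q y = 1)
    (hQc : ∑ y, Q y * ψ y = c) :
    ∑ y, Q y * Real.log (Q y / S y)
      = (∑ y, Q y * Real.log (Q y / Qt θs y))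
        + ∑ y, Qt θs y * Real.log (Qt θs y / S y) :=
  stmt10_general S hS ψ c A hA Qt hQt θs hmatch Q hQsum hQc
end
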